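/- Let n ≥ 3 and let B be an equidistant monotone bead distribution on [μ,∞), i.e., B₁ − μ = B₂ − B₁ = ⋯ = Bₙ − B_{n−1} > 0. Then there is no monotone bead distribution A with A ≠ B such that B can be obtained from A by a finite sequence of admissible bead slides. -/
import Mathlib


/-- `A` is a monotone bead distribution of `n` beads on `[μ,∞)`.
We use the convention `A 0 = μ`, so the beads are `A 1 < ⋯ < A n` with
`μ ≤ A 1` and nondecreasing successive gaps. -/
def BeadMono (n : ℕ) (μ : ℝ) (A : ℕ → ℝ) : Prop :=
  A 0 = μ ∧ A 0 ≤ A 1 ∧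
  (∀ k, 2 ≤ k → k ≤ n → A (k - 1) < A k) ∧
  (∀ k, 2 ≤ k → k ≤ n → A (k - 1) - A (k - 2) ≤ A k - A (k - 1))

/-- One admissible bead slide: move the `k`-th bead to the right by `δ ≥ 0`
so that the result is again monotone. -/
def BeadSlide (n : ℕ) (μ : ℝ) (A B : ℕ → ℝ) : Prop :=
  ∃ k δ, 1 ≤ k ∧ k ≤ n ∧ 0 ≤ δ ∧
    B = Function.update A k (A k + δ) ∧ BeadMono n μ B

/-- `BeadReach n μ A B`: `B` is obtained from `A` by finitely many admissible slides. -/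
def BeadReach (n : ℕ) (μ : ℝ) : (ℕ → ℝ) → (ℕ → ℝ) → Prop :=
  Relation.ReflTransGen (BeadSlide n μ)

lemma slide_to_equidistant (n : ℕ) (μ : ℝ) (A B : ℕ → ℝ)
    (hn : 3 ≤ n) (hA : BeadMono n μ A) (hs : BeadSlide n μ A B)
    (hB0 : B 0 = μ)
    (heq : ∀ k, 2 ≤ k → k ≤ n → B k - B (k - 1) = B 1 - μ) :
    A = B := by
  obtain ⟨k, δ, hk1, hkn, hδ, hBdef, hBm⟩ := hs
  have hAj : ∀ j, j ≠ k → A j = B j := by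
    intro j hj; rw [hBdef, Function.update_of_ne hj]
  have hBk : B k = A k + δ := by rw [hBdef, Function.update_self]
  have hδ0 : δ ≤ 0 := by
    rcases eq_or_lt_of_le hk1 with h1 | h2
    · have hk : k = 1 := h1.symm
      subst hk
      have g3 := hA.2.2.2 3 (by norm_num) hn
      norm_num at g3
      have e2 : A 2 = B 2 := hAj 2 (by norm_num)
      have e3 : A 3 = B 3 := hAj 3 (by norm_num)
      have d3 := heq 3 (by norm_num) hn
      have d2 := heq 2 (by norm_num) (by omega)
      norm_num at d3 d2
      linarith
    · have h2' : 2 ≤ k := h2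
      have gk := hA.2.2.2 k h2' hkn
      have e1 : A (k - 1) = B (k - 1) := hAj _ (by omega)
      have e2 : A (k - 2) = B (k - 2) := hAj _ (by omega)
      have dk := heq k h2' hkn
      have dprev : B (k - 1) - B (k - 2) = B 1 - μ := by
        rcases eq_or_lt_of_le h2' with h2e | h3
        · have : k = 2 := h2e.symm
          subst this
          norm_num [hB0]
        · have h3' : 3 ≤ k := h3
          have := heq (k - 1) (by omega) (by omega)
          have hkk : k - 1 - 1 = k - 2 := by omega
          rwa [hkk] at this
      linarith
  have hz : δ = 0 := le_antisymm hδ0 hδ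
  rw [hBdef, hz, add_zero, Function.update_eq_self]

/-- If `n ≥ 3` and `B` is equidistant with positive common gap,
then no monotone distribution `A ≠ B` can be slid to `B`. -/
theorem equidistant_minimal (n : ℕ) (μ : ℝ) (B : ℕ → ℝ)
    (hn : 3 ≤ n) (hB : BeadMono n μ B)
    (heq : ∀ k, 2 ≤ k → k ≤ n → B k - B (k - 1) = B 1 - μ)
    (hpos : 0 < B 1 - μ) :
    ∀ A : ℕ → ℝ, BeadMono n μ A → BeadReach n μ A B →
      ∀ k, 1 ≤ k → k ≤ n → A k = B k := by
  have main : ∀ X, BeadReach n μ X B → BeadMono n μ X → X = B := by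
    intro X hX
    induction hX using Relation.ReflTransGen.head_induction_on with
    | refl => intro _; rfl
    | head hstep hrest ih =>
      intro hmono
      obtain ⟨k, δ, hk1, hkn, hδ, hBdef, hBm⟩ := hstep
      have hmid := ih hBm
      subst hmid
      exact slide_to_equidistant n μ _ _ hn hmono
        ⟨k, δ, hk1, hkn, hδ, hBdef, hBm⟩ hB.1 heq
  intro A hA hreach k _ _
  rw [main A hreach hA]
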